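/- arXiv:1811.06026 — 2 statements merged into one kernel-verified Lean document; each statement's English description precedes it below -/
import Mathlib

section
/- In the three-level policy, condition on the intersection W of events W1 (number of pulls of each arm a in each first-level group is within L_fdp·√(T1·log T) of q_a·T1) and W2 (concentration of all consecutive averages in the first-level reward tapes within √(2·log(T)/n) of the mean for windows of length n). Then for every first-level group s and arm a, the empirical mean μ̄_a^{1,s} of the arm-a pulls in group s satisfies |μ̄_a^{1,s} − μ_a| ≤ √(4·log(T)/(q_a·T1)), provided T is larger than some absolute constant. -/
open MeasureTheory ProbabilityTheory

noncomputable section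

namespace IncExp

/-- Number of pulls of arm `a` among the rounds in `S`. -/
def pullCount {Ω : Type} {K : ℕ} (A : ℕ → Ω → Fin K) (S : Finset ℕ) (a : Fin K) (ω : Ω) : ℕ :=
  (S.filter fun s => A s ω = a).card

/-- Empirical mean reward of arm `a` among the rounds in `S`. -/
def empMean {Ω : Type} {K : ℕ} (A : ℕ → Ω → Fin K) (r : ℕ → Ω → ℝ)
    (S : Finset ℕ) (a : Fin K) (ω : Ω) : ℝ :=
  (∑ s ∈ S.filter (fun s => A s ω = a), r s ω) / (pullCount A S a ω : ℝ)

/-- Index of round `t` among the pulls of arm `a` within the rounds `S`: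
the number of pulls of `a` in `S` strictly before round `t`. -/
def idxIn {Ω : Type} {K : ℕ} (A : ℕ → Ω → Fin K) (S : Finset ℕ) (a : Fin K) (ω : Ω) (t : ℕ) : ℕ :=
  pullCount A (S.filter fun s => s < t) a ω

/-- The rounds of `S` carrying the `m`-th (inclusive) through `n`-th (exclusive)
pulls of arm `a` within `S`. -/
def window {Ω : Type} {K : ℕ} (A : ℕ → Ω → Fin K) (S : Finset ℕ) (a : Fin K) (ω : Ω)
    (m n : ℕ) : Finset ℕ :=
  S.filter fun t => A t ω = a ∧ m ≤ idxIn A S a ω t ∧ idxIn A S a ω t < n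

/-- The rounds of `S` carrying the first `n` pulls of arm `a` within `S`. -/
def firstPulls {Ω : Type} {K : ℕ} (A : ℕ → Ω → Fin K) (S : Finset ℕ) (a : Fin K) (ω : Ω)
    (n : ℕ) : Finset ℕ :=
  window A S a ω 0 n

/-- Average reward over a set `W` of rounds. -/
def meanOver {Ω : Type} (r : ℕ → Ω → ℝ) (W : Finset ℕ) (ω : Ω) : ℝ :=
  (∑ t ∈ W, r t ω) / (W.card : ℝ)

/-- An execution of the social-learning bandit process with `K` arms, `T` rounds,
an order-based disclosure policy given by the observation sets `obs`, and agents
responding according to Assumption 1 (with constants `Nest` and `C_est = 1/16`).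
Rewards are Bernoulli, read off an i.i.d. reward tape. -/
structure Execution (Ω : Type) [MeasureSpace Ω] (K T Nest : ℕ) where
  /-- the mean rewards -/
  μ : Fin K → ℝ
  μ_mem : ∀ a, μ a ∈ Set.Icc (1/3 : ℝ) (2/3 : ℝ)
  /-- the subset of past rounds disclosed to agent `t` (fixed in advance) -/
  obs : ℕ → Finset ℕ
  obs_lt : ∀ t, ∀ s ∈ obs t, s < t
  /-- the arm pulled by agent `t` -/
  A : ℕ → Ω → Fin K
  A_meas : ∀ t, Measurable (A t)
  /-- the reward collected at round `t` -/
  r : ℕ → Ω → ℝ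
  /-- the reward tape: cell `(a, j)` is the reward of the `j`-th pull of arm `a` -/
  tape : Fin K → ℕ → Ω → ℝ
  tape_meas : ∀ a j, Measurable (tape a j)
  tape01 : ∀ a j ω, tape a j ω = 0 ∨ tape a j ω = 1
  tape_dist : ∀ a j, volume {ω | tape a j ω = 1} = ENNReal.ofReal (μ a)
  tape_indep : iIndepFun
    (fun p : Fin K × ℕ => fun ω => tape p.1 p.2 ω) volume
  r_eq : ∀ t ω, r t ω = tape (A t ω) (pullCount A (Finset.range t) (A t ω) ω) ω
  /-- the reward estimates formed by agent `t` -/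
  est : ℕ → Fin K → Ω → ℝ
  est_close : ∀ t a ω, Nest ≤ pullCount A (obs t) a ω →
      |est t a ω - empMean A r (obs t) a ω| < (1/16 : ℝ) / Real.sqrt (pullCount A (obs t) a ω)
  est_zero : ∀ t a ω, pullCount A (obs t) a ω = 0 → (1/3 : ℝ) ≤ est t a ω
  /-- each agent pulls an arm maximizing its estimate -/
  A_max : ∀ t ω a, est t a ω ≤ est t (A t ω) ω

/-- Regret of an execution. -/
def regret {Ω : Type} [MeasureSpace Ω] {K T Nest : ℕ} (e : Execution Ω K T Nest) : ℝ :=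
  (T : ℝ) * (⨆ a, e.μ a) - ∑ t ∈ Finset.range T, ∫ ω, e.μ (e.A t ω)

/-- `S` is a full-disclosure path: every agent in `S` observes exactly the full
history of the preceding rounds of `S`. -/
def IsFDPath (obs : ℕ → Finset ℕ) (S : Finset ℕ) : Prop :=
  ∀ t ∈ S, obs t = S.filter fun s => s < t

/-- The `s`-th first-level group of the three-level policy: `T1` full-disclosure
paths of `Lfdp` rounds each. -/
def grp (T1 Lfdp s : ℕ) : Finset ℕ :=
  Finset.Ico (s * T1 * Lfdp) ((s + 1) * T1 * Lfdp)

/-- The three-level policy with parameters `σ, T1, T2, Lfdp`: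
level 1 consists of `σ` groups of `T1` full-disclosure paths of length `Lfdp` each;
level 2 consists of `σ` groups of `T2` agents, each agent of the `s`-th second-level
group observing exactly the history of the `s`-th first-level group;
every agent of level 3 (all remaining rounds) observes exactly the full history of
the first two levels. -/
def ThreeLevel (obs : ℕ → Finset ℕ) (σ T1 T2 Lfdp : ℕ) : Prop :=
  (∀ j < σ * T1, IsFDPath obs (Finset.Ico (j * Lfdp) ((j + 1) * Lfdp))) ∧
  (∀ s < σ, ∀ t ∈ Finset.Ico (σ * T1 * Lfdp + s * T2) (σ * T1 * Lfdp + (s + 1) * T2),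
      obs t = grp T1 Lfdp s) ∧
  (∀ t, σ * T1 * Lfdp + σ * T2 ≤ t → obs t = Finset.range (σ * T1 * Lfdp + σ * T2))

/-- The parameter `σ = 2^10 * log T` of the three-level policy. -/
def sigT (T : ℕ) : ℕ := ⌈(2:ℝ)^(10:ℕ) * Real.log T⌉₊

/-- The parameter `T1 = T^(4/7) * (log T)^(-1/7)` of the three-level policy. -/
def T1of (T : ℕ) : ℕ := ⌈(T : ℝ) ^ ((4:ℝ)/7) * (Real.log T) ^ (-(1:ℝ)/7)⌉₊

/-- The parameter `T2 = T^(6/7) * (log T)^(-5/7)` of the three-level policy. -/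
def T2of (T : ℕ) : ℕ := ⌈(T : ℝ) ^ ((6:ℝ)/7) * (Real.log T) ^ (-(5:ℝ)/7)⌉₊

/-! Within group `s`, the `j`-th pull of arm `a` reads cell `j` of the group's tape, so the
empirical mean is the average of the first `N` cells, `N` the number of pulls; `W2` bounds its
deviation by `√(2 log T / N)`. Since `T1 ≈ T^{4/7}` outgrows `log T`, for large `T` the slack
`Lfdp·√(T1 log T)` in `W1` is at most `q a · T1 / 2`, so `N ≥ q a · T1 / 2`; and
`N ≤ T1 · Lfdp ≤ T`, so the first `N` cells form an admissible window of `W2`. -/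

open Filter

section Rank

open Finset

theorem strictMonoOn_card_filter_lt (F : Finset ℕ) :
    StrictMonoOn (fun t => #{u ∈ F | u < t}) F := by
  intro t₁ h₁ t₂ _ hlt
  refine card_lt_card ((ssubset_iff_of_subset ?_).2 ⟨t₁, ?_, ?_⟩)
  · exact monotone_filter_right F fun u _ hu => hu.trans hlt
  · simpa [hlt] using h₁
  · simp

theorem image_card_filter_lt (F : Finset ℕ) :
    F.image (fun t => #{u ∈ F | u < t}) = range #F := by
  refine eq_of_subset_of_card_le (fun j hj => ?_) ?_
  · obtain ⟨t, ht, rfl⟩ := mem_image.1 hj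
    exact mem_range.2 (card_lt_card (filter_ssubset.2 ⟨t, ht, lt_irrefl t⟩))
  · rw [card_range, card_image_of_injOn (strictMonoOn_card_filter_lt F).injOn]

theorem sum_card_filter_lt {M : Type*} [AddCommMonoid M] (F : Finset ℕ) (f : ℕ → M) :
    ∑ t ∈ F, f #{u ∈ F | u < t} = ∑ j ∈ range #F, f j := by
  rw [← image_card_filter_lt, sum_image (strictMonoOn_card_filter_lt F).injOn]

end Rank

section EmpiricalMean

variable {Ω : Type} {K : ℕ} {A : ℕ → Ω → Fin K} {r : ℕ → Ω → ℝ} {S : Finset ℕ} {a : Fin K}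
  {ω : Ω} {g : ℕ → ℝ}

theorem empMean_eq_average_of_tape (hr : ∀ t ∈ S, A t ω = a → r t ω = g (idxIn A S a ω t)) :
    empMean A r S a ω =
      (∑ j ∈ Finset.range (pullCount A S a ω), g j) / pullCount A S a ω := by
  have hidx : ∀ t, idxIn A S a ω t = ((S.filter (A · ω = a)).filter (· < t)).card := by
    intro t
    rw [idxIn, pullCount, Finset.filter_comm]
  have hsum : ∑ t ∈ S.filter (A · ω = a), r t ω = ∑ j ∈ Finset.range (pullCount A S a ω), g j := by
    rw [Finset.sum_congr rfl fun t ht => (Finset.mem_filter.1 ht).elim (hr t), pullCount,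
      ← sum_card_filter_lt]
    exact Finset.sum_congr rfl fun t _ => by rw [hidx]
  rw [empMean, hsum]

theorem abs_empMean_sub_le_of_window_bound {μ ℓ m : ℝ} {T : ℕ}
    (hr : ∀ t ∈ S, A t ω = a → r t ω = g (idxIn A S a ω t))
    (hwindow : ∀ τ1 τ2 : ℕ, τ1 ≤ τ2 → τ2 < T →
      |(∑ j ∈ Finset.Icc τ1 τ2, g j) / ((τ2 - τ1 + 1 : ℕ) : ℝ) - μ|
        ≤ Real.sqrt (2 * ℓ / ((τ2 - τ1 + 1 : ℕ) : ℝ)))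
    (hℓ : 0 ≤ ℓ) (hm : 0 < m) (hmN : m ≤ pullCount A S a ω) (hNT : pullCount A S a ω ≤ T) :
    |empMean A r S a ω - μ| ≤ Real.sqrt (2 * ℓ / m) := by
  set N := pullCount A S a ω
  have hN : 0 < N := by exact_mod_cast hm.trans_le hmN
  have h := hwindow 0 (N - 1) (Nat.zero_le _) (by omega)
  rw [show N - 1 - 0 + 1 = N by omega, ← Nat.range_eq_Icc_zero_sub_one N hN.ne'] at h
  rw [empMean_eq_average_of_tape hr]
  exact h.trans (Real.sqrt_le_sqrt (div_le_div_of_nonneg_left (by positivity) hm hmN))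

end EmpiricalMean

theorem mul_sqrt_mul_le_half_of_le {L q c ℓ : ℝ} (hL : 0 ≤ L) (hq : 0 < q) (hc : 0 ≤ c)
    (h : 4 * L ^ 2 / q ^ 2 * ℓ ≤ c) :
    L * Real.sqrt (c * ℓ) ≤ q * c / 2 := by
  rw [div_mul_eq_mul_div, div_le_iff₀ (by positivity)] at h
  rw [← Real.sqrt_sq hL, ← Real.sqrt_mul (sq_nonneg L)]
  exact Real.sqrt_le_iff.2 ⟨by positivity, by nlinarith⟩

theorem card_grp (T1 Lfdp s : ℕ) : (grp T1 Lfdp s).card = T1 * Lfdp := by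
  rw [grp, Nat.card_Ico, add_mul, one_mul, add_mul, Nat.add_sub_cancel_left]

section Asymptotics

open Real

theorem eventually_one_le_log : ∀ᶠ T : ℕ in atTop, 1 ≤ log T :=
  (tendsto_log_atTop.comp tendsto_natCast_atTop_atTop).eventually_ge_atTop 1

theorem T1of_pos {T : ℕ} (hlog : 0 < log T) : 0 < T1of T :=
  Nat.ceil_pos.2 (mul_pos (rpow_pos_of_pos (hlog.trans_le (log_le_self (Nat.cast_nonneg T))) _)
    (rpow_pos_of_pos hlog _))

theorem T1of_le {T : ℕ} (hlog : 1 ≤ log T) : (T1of T : ℝ) ≤ 2 * (T : ℝ) ^ ((4 : ℝ) / 7) := by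
  have hT : (1 : ℝ) ≤ T := hlog.trans (log_le_self (Nat.cast_nonneg T))
  have hpow : 1 ≤ (T : ℝ) ^ ((4 : ℝ) / 7) := one_le_rpow hT (by norm_num)
  have hlogpow : log T ^ (-(1 : ℝ) / 7) ≤ 1 := rpow_le_one_of_one_le_of_nonpos hlog (by norm_num)
  calc (T1of T : ℝ) ≤ (T : ℝ) ^ ((4 : ℝ) / 7) * log T ^ (-(1 : ℝ) / 7) + 1 :=
        (Nat.ceil_lt_add_one (by positivity)).le
    _ ≤ (T : ℝ) ^ ((4 : ℝ) / 7) * 1 + 1 := by gcongr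
    _ ≤ 2 * (T : ℝ) ^ ((4 : ℝ) / 7) := by linarith

theorem eventually_mul_log_le_T1of (c : ℝ) : ∀ᶠ T : ℕ in atTop, c * log T ≤ T1of T := by
  have hreal : ∀ᶠ x : ℝ in atTop, c * log x ≤ x ^ ((4 : ℝ) / 7) * log x ^ (-(1 : ℝ) / 7) := by
    filter_upwards [((isLittleO_log_rpow_rpow_atTop ((8 : ℝ) / 7)
      (by norm_num : (0 : ℝ) < 4 / 7)).const_mul_left c).bound one_pos,
      eventually_gt_atTop 1] with x hx hx1
    have hlog : 0 < log x := log_pos hx1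
    rw [one_mul, norm_of_nonneg (rpow_nonneg (by linarith) _)] at hx
    rw [neg_div, rpow_neg hlog.le, ← div_eq_mul_inv, le_div_iff₀ (by positivity)]
    calc c * log x * log x ^ ((1 : ℝ) / 7) = c * log x ^ ((8 : ℝ) / 7) := by
          rw [mul_assoc, ← rpow_one_add' hlog.le (by norm_num)]; norm_num
      _ ≤ ‖c * log x ^ ((8 : ℝ) / 7)‖ := le_norm_self _
      _ ≤ x ^ ((4 : ℝ) / 7) := hx
  exact (tendsto_natCast_atTop_atTop.eventually hreal).mono fun T h => h.trans (Nat.le_ceil _)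

theorem eventually_T1of_mul_le (L : ℕ) : ∀ᶠ T : ℕ in atTop, T1of T * L ≤ T := by
  filter_upwards [eventually_one_le_log, ((tendsto_rpow_atTop (by norm_num : (0 : ℝ) < 3 / 7)).comp
    tendsto_natCast_atTop_atTop).eventually_ge_atTop (2 * (L : ℝ))] with T hlog hT
  have hT0 : (0 : ℝ) < T := by linarith [log_le_self (Nat.cast_nonneg (α := ℝ) T)]
  have : (T1of T : ℝ) * L ≤ T :=
    calc (T1of T : ℝ) * L ≤ 2 * (T : ℝ) ^ ((4 : ℝ) / 7) * L := by gcongr; exact T1of_le hlog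
      _ = 2 * L * (T : ℝ) ^ ((4 : ℝ) / 7) := by ring
      _ ≤ (T : ℝ) ^ ((3 : ℝ) / 7) * (T : ℝ) ^ ((4 : ℝ) / 7) := by gcongr; exact hT
      _ = T := by rw [← rpow_add hT0]; norm_num
  exact_mod_cast this

end Asymptotics

/-- in the three-level policy (with the parameters of Theorem 3.3),
write `gtape s a` for the reward tape of arm `a` in first-level group `s`, so that
the `j`-th pull of arm `a` in group `s` receives reward `gtape s a j`.  Fix an
outcome `ω` on which the events `W1` (the number of pulls of each arm `a` in each
first-level group is within `Lfdp·√(T1 log T)` of `q a · T1`) and `W2` (every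
window of `n` consecutive cells of each first-level tape has average within
`√(2 log T / n)` of the mean) hold.  Then, provided `T` is larger than some
constant, for every first-level group `s` and arm `a`, the empirical mean
`μ̄_a^{1,s}` of the arm-`a` pulls in group `s` satisfies
`|μ̄_a^{1,s} - μ a| ≤ √(4 log T / (q a · T1))`. -/
theorem first_level_group_concentration (Nest Lfdp : ℕ) (q : Fin 2 → ℝ)
    (hq0 : ∀ a, 0 < q a) :
    ∃ T0 : ℕ, ∀ T : ℕ, T0 ≤ T →
    ∀ (Ω : Type) [MeasureSpace Ω] [IsProbabilityMeasure (volume : Measure Ω)],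
    ∀ e : Execution Ω 2 T Nest,
      ThreeLevel e.obs (sigT T) (T1of T) (T2of T) Lfdp →
      (∀ (a : Fin 2) (j : ℕ), j < sigT T * T1of T →
        ∫ ω, (pullCount e.A (Finset.Ico (j * Lfdp) ((j + 1) * Lfdp)) a ω : ℝ) = q a) →
    ∀ gtape : ℕ → Fin 2 → ℕ → Ω → ℝ,
      (∀ s < sigT T, ∀ (ω : Ω), ∀ t ∈ grp (T1of T) Lfdp s,
        e.r t ω = gtape s (e.A t ω) (idxIn e.A (grp (T1of T) Lfdp s) (e.A t ω) ω t) ω) →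
    ∀ ω : Ω,
      -- event W1 at ω
      (∀ s < sigT T, ∀ a : Fin 2,
        |(pullCount e.A (grp (T1of T) Lfdp s) a ω : ℝ) - q a * T1of T|
          ≤ (Lfdp : ℝ) * Real.sqrt (T1of T * Real.log T)) →
      -- event W2 at ω
      (∀ s < sigT T, ∀ a : Fin 2, ∀ τ1 τ2 : ℕ, τ1 ≤ τ2 → τ2 < T →
        |(∑ j ∈ Finset.Icc τ1 τ2, gtape s a j ω) / ((τ2 - τ1 + 1 : ℕ) : ℝ) - e.μ a|
          ≤ Real.sqrt (2 * Real.log T / ((τ2 - τ1 + 1 : ℕ) : ℝ))) →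
      ∀ s < sigT T, ∀ a : Fin 2,
        |empMean e.A e.r (grp (T1of T) Lfdp s) a ω - e.μ a|
          ≤ Real.sqrt (4 * Real.log T / (q a * T1of T)) := by
  obtain ⟨T0, hT0⟩ := eventually_atTop.1 (eventually_one_le_log.and
    ((eventually_all.2 fun a => eventually_mul_log_le_T1of (4 * Lfdp ^ 2 / q a ^ 2)).and
      (eventually_T1of_mul_le Lfdp)))
  refine ⟨T0, fun T hT Ω _ _ e _ _ gtape hg ω hW1 hW2 s hs a => ?_⟩
  obtain ⟨hlog, hT1, hT1L⟩ := hT0 T hT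
  have hT1pos : (0 : ℝ) < T1of T := by exact_mod_cast T1of_pos (by linarith)
  have hslack := mul_sqrt_mul_le_half_of_le (Nat.cast_nonneg Lfdp) (hq0 a) hT1pos.le (hT1 a)
  have hpulls : q a * T1of T / 2 ≤ pullCount e.A (grp (T1of T) Lfdp s) a ω := by
    linarith [(abs_le.1 (hW1 s hs a)).1]
  have hpullsT : pullCount e.A (grp (T1of T) Lfdp s) a ω ≤ T :=
    (Finset.card_filter_le _ _).trans ((card_grp _ _ _).trans_le hT1L)
  calc |empMean e.A e.r (grp (T1of T) Lfdp s) a ω - e.μ a|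
      ≤ Real.sqrt (2 * Real.log T / (q a * T1of T / 2)) :=
        abs_empMean_sub_le_of_window_bound (fun t ht hta => by rw [hg s hs ω t ht, hta])
          (hW2 s hs a) (by linarith) (by have := hq0 a; positivity) hpulls hpullsT
    _ = Real.sqrt (4 * Real.log T / (q a * T1of T)) := by
        congr 1
        field_simp
        ring

end IncExp
end
end

section
/- In the three-level policy, condition on the intersection W of the events W1 (concentration of per-group pull counts), W2 (concentration of tape averages), and W3 (anti-concentration: for each arm a there is a group s_a whose first q_a·T1 tape cells for arm a average at least μ_a + 1/√(q_a·T1) while the first q_{3−a}·T1 tape cells for arm 3−a average at most μ_{3−a} − 1/√(q_{3−a}·T1)). Then for each arm a ∈ {1,2} there exists a first-level group s_a such that the empirical means of the pulls in group s_a satisfy μ̄_a^{1,s_a} > μ_a + 1/(4·√(q_a·T1)) and μ̄_{3−a}^{1,s_a} < μ_{3−a} − 1/(4·√(q_{3−a}·T1)), provided T is larger than some absolute constant. -/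
open MeasureTheory ProbabilityTheory

noncomputable section

namespace IncExp

/-! Take the group `s` given by `W3`. On `W1` it pulls arm `a` about `N ≈ q a · T1` times, up
to `O(√(T1 log T))`, and by the tape coupling these pulls read the first `N` cells of its tape
for `a`. By `W3` the first `⌊q a · T1⌋` cells carry a total excess of about `√(q a · T1)` over
their mean, while by `W2` the cells between the two lengths deviate from their mean by
`O(√(log T · √(T1 log T))) = o(√T1)`, so a quarter of the excess survives in the average over
all `N` pulls. The other arm is the same argument applied to the negated tape. -/

open Finset in
theorem sum_card_filter_lt_s9 {α M : Type*} [LinearOrder α] [AddCommMonoid M]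
    (s : Finset α) (g : ℕ → M) :
    ∑ x ∈ s, g #{y ∈ s | y < x} = ∑ i ∈ range #s, g i := by
  induction s using Finset.induction_on_max with
  | empty => simp
  | insert a s ha ih =>
    have ha' : a ∉ s := fun h => lt_irrefl a (ha a h)
    have below : ∀ x ∈ s, {y ∈ insert a s | y < x} = {y ∈ s | y < x} := fun x hx => by
      rw [filter_insert, if_neg (ha x hx).not_gt]
    have top : {y ∈ insert a s | y < a} = s := by
      rw [filter_insert, if_neg (lt_irrefl a), filter_true_of_mem ha]
    rw [sum_insert ha', card_insert_of_notMem ha', sum_range_succ, top, add_comm,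
      sum_congr rfl fun x hx => by rw [below x hx], ih]

theorem empMean_eq_of_tape {Ω : Type} {K : ℕ} {A : ℕ → Ω → Fin K} {r : ℕ → Ω → ℝ}
    {S : Finset ℕ} {ω : Ω} (g : Fin K → ℕ → ℝ)
    (hr : ∀ t ∈ S, r t ω = g (A t ω) (idxIn A S (A t ω) ω t)) (a : Fin K) :
    empMean A r S a ω = (∑ j ∈ Finset.range (pullCount A S a ω), g a j) / pullCount A S a ω := by
  unfold empMean
  congr 1
  rw [pullCount, ← sum_card_filter_lt_s9]
  refine Finset.sum_congr rfl fun t ht => ?_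
  obtain ⟨htS, hta⟩ := Finset.mem_filter.mp ht
  rw [hr t htS, hta, idxIn, pullCount, Finset.filter_comm]

def WindowMeansConcentrate (g : ℕ → ℝ) (μ L : ℝ) (n : ℕ) : Prop :=
  ∀ τ1 τ2 : ℕ, τ1 ≤ τ2 → τ2 < n →
    |(∑ j ∈ Finset.Icc τ1 τ2, g j) / ((τ2 - τ1 + 1 : ℕ) : ℝ) - μ|
      ≤ Real.sqrt (2 * L / ((τ2 - τ1 + 1 : ℕ) : ℝ))

theorem WindowMeansConcentrate.neg {g : ℕ → ℝ} {μ L : ℝ} {n : ℕ}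
    (h : WindowMeansConcentrate g μ L n) : WindowMeansConcentrate (fun j => -g j) (-μ) L n := by
  intro τ1 τ2 h12 h2n
  rw [Finset.sum_neg_distrib, neg_div, neg_sub_neg, abs_sub_comm]
  exact h τ1 τ2 h12 h2n

theorem WindowMeansConcentrate.abs_sum_Ico_sub_le {g : ℕ → ℝ} {μ L : ℝ} {n : ℕ}
    (h : WindowMeansConcentrate g μ L n) {M N : ℕ} (hMN : M ≤ N) (hN : N ≤ n) :
    |∑ j ∈ Finset.Ico M N, g j - ((N : ℝ) - M) * μ| ≤ Real.sqrt (2 * L * ((N : ℝ) - M)) := by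
  rcases hMN.eq_or_lt with rfl | hlt
  · simp
  have hlen : ((N - 1 - M + 1 : ℕ) : ℝ) = (N : ℝ) - M := by
    rw [show N - 1 - M + 1 = N - M by omega, Nat.cast_sub hMN]
  have hpos : (0 : ℝ) < (N : ℝ) - M := sub_pos.mpr (by exact_mod_cast hlt)
  have hw := h M (N - 1) (by omega) (by omega)
  rw [← Finset.Ico_add_one_right_eq_Icc, Nat.sub_add_cancel (by omega), hlen] at hw
  calc |∑ j ∈ Finset.Ico M N, g j - ((N : ℝ) - M) * μ|
      = |(∑ j ∈ Finset.Ico M N, g j) / ((N : ℝ) - M) - μ| * ((N : ℝ) - M) := by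
        rw [← abs_of_pos hpos, ← abs_mul, abs_of_pos hpos]
        congr 1
        field_simp
    _ ≤ Real.sqrt (2 * L / ((N : ℝ) - M)) * ((N : ℝ) - M) := by gcongr
    _ = Real.sqrt (2 * L * ((N : ℝ) - M)) := by
        rw [← Real.sqrt_sq hpos.le, ← Real.sqrt_mul' _ (sq_nonneg _), Real.sqrt_sq hpos.le]
        field_simp

theorem WindowMeansConcentrate.abs_sum_range_sub_le {g : ℕ → ℝ} {μ L : ℝ} {n : ℕ}
    (h : WindowMeansConcentrate g μ L n) {M N : ℕ} (hM : M ≤ n) (hN : N ≤ n) :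
    |∑ j ∈ Finset.range N, g j - ∑ j ∈ Finset.range M, g j - ((N : ℝ) - M) * μ|
      ≤ Real.sqrt (2 * L * |(N : ℝ) - M|) := by
  wlog hMN : M ≤ N generalizing M N
  · have := this hN hM (by omega)
    rwa [abs_sub_comm (N : ℝ), ← abs_neg, show -(∑ j ∈ Finset.range N, g j -
      ∑ j ∈ Finset.range M, g j - ((N : ℝ) - M) * μ) = ∑ j ∈ Finset.range M, g j -
      ∑ j ∈ Finset.range N, g j - ((M : ℝ) - N) * μ by ring]
  rw [← Finset.sum_Ico_eq_sub _ hMN,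
    abs_of_nonneg (a := (N : ℝ) - M) (sub_nonneg.mpr (by exact_mod_cast hMN))]
  exact h.abs_sum_Ico_sub_le hMN hN

theorem WindowMeansConcentrate.lt_mean_of_le_mean_floor {g : ℕ → ℝ} {μ L u δ : ℝ} {n N : ℕ}
    (h : WindowMeansConcentrate g μ L n) (hL : 1 ≤ L) (hu : 128 * L * (δ + 1) ≤ u)
    (hn : u + δ ≤ n) (hN : |(N : ℝ) - u| ≤ δ)
    (hfloor : μ + 1 / Real.sqrt u ≤ (∑ j ∈ Finset.range ⌊u⌋₊, g j) / ⌊u⌋₊) :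
    μ + 1 / (4 * Real.sqrt u) < (∑ j ∈ Finset.range N, g j) / N := by
  set M := ⌊u⌋₊
  set s := Real.sqrt u
  obtain ⟨hNlo, hNhi⟩ := abs_le.mp hN
  have hδ : 0 ≤ δ := (abs_nonneg _).trans hN
  have hδu : 128 * (δ + 1) ≤ u := le_trans (by nlinarith) hu
  have hMlo : u - 1 < M := Nat.sub_one_lt_floor u
  have hMhi : (M : ℝ) ≤ u := Nat.floor_le (by linarith)
  have hM : (0 : ℝ) < M := by linarith
  have hNpos : (0 : ℝ) < N := by linarith
  have hs : 0 < s := Real.sqrt_pos.mpr (by linarith)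
  have hss : s * s = u := Real.mul_self_sqrt (by linarith)
  have hdev := h.abs_sum_range_sub_le (M := M) (N := N)
    (by exact_mod_cast (show (M : ℝ) ≤ n by linarith))
    (by exact_mod_cast (show (N : ℝ) ≤ n by linarith))
  have herr : Real.sqrt (2 * L * |(N : ℝ) - M|) ≤ s / 8 := by
    rw [Real.sqrt_le_left (by positivity), div_pow, Real.sq_sqrt (by linarith)]
    calc 2 * L * |(N : ℝ) - M| ≤ 2 * L * (δ + 1) := by
          gcongr
          exact abs_le.mpr ⟨by linarith, by linarith⟩
      _ ≤ u / 8 ^ 2 := by linarith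
  have hSM : M * μ + M / s ≤ ∑ j ∈ Finset.range M, g j := by
    have := (le_div_iff₀ hM).mp hfloor
    rwa [add_mul, one_div_mul_eq_div, mul_comm μ] at this
  have hmargin : N / (4 * s) + s / 8 < M / s := by
    have : N / 4 + s * s / 8 < M := by linarith
    calc N / (4 * s) + s / 8 = (N / 4 + s * s / 8) / s := by field_simp
      _ < M / s := div_lt_div_of_pos_right this hs
  rw [lt_div_iff₀ hNpos]
  calc (μ + 1 / (4 * s)) * N = N * μ + N / (4 * s) := by ring
    _ < N * μ + M / s - s / 8 := by linarith
    _ ≤ ∑ j ∈ Finset.range N, g j := by linarith [(abs_le.mp (hdev.trans herr)).1]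

theorem WindowMeansConcentrate.mean_lt_of_mean_floor_le {g : ℕ → ℝ} {μ L u δ : ℝ} {n N : ℕ}
    (h : WindowMeansConcentrate g μ L n) (hL : 1 ≤ L) (hu : 128 * L * (δ + 1) ≤ u)
    (hn : u + δ ≤ n) (hN : |(N : ℝ) - u| ≤ δ)
    (hfloor : (∑ j ∈ Finset.range ⌊u⌋₊, g j) / ⌊u⌋₊ ≤ μ - 1 / Real.sqrt u) :
    (∑ j ∈ Finset.range N, g j) / N < μ - 1 / (4 * Real.sqrt u) := by
  have := h.neg.lt_mean_of_le_mean_floor hL hu hn hN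
    (by simp only [Finset.sum_neg_distrib, neg_div]; linarith)
  simp only [Finset.sum_neg_distrib, neg_div] at this
  linarith

theorem T1of_bounds {T : ℕ} (hL : 1 ≤ Real.log T) :
    (T : ℝ) ^ ((3 : ℝ) / 7) ≤ T1of T ∧ (T1of T : ℝ) < (T : ℝ) ^ ((4 : ℝ) / 7) + 1 := by
  have hLT : Real.log T ≤ T := Real.log_le_self (Nat.cast_nonneg T)
  have hT : (0 : ℝ) < T := by linarith
  constructor
  · calc (T : ℝ) ^ ((3 : ℝ) / 7) = (T : ℝ) ^ ((4 : ℝ) / 7) * (T : ℝ) ^ (-(1 : ℝ) / 7) := by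
          rw [← Real.rpow_add hT]; norm_num
      _ ≤ (T : ℝ) ^ ((4 : ℝ) / 7) * (Real.log T) ^ (-(1 : ℝ) / 7) :=
          mul_le_mul_of_nonneg_left
            (Real.rpow_le_rpow_of_nonpos (by linarith) hLT (by norm_num)) (by positivity)
      _ ≤ T1of T := Nat.le_ceil _
  · calc (T1of T : ℝ) < (T : ℝ) ^ ((4 : ℝ) / 7) * (Real.log T) ^ (-(1 : ℝ) / 7) + 1 :=
          Nat.ceil_lt_add_one (by positivity)
      _ ≤ (T : ℝ) ^ ((4 : ℝ) / 7) + 1 := by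
          gcongr
          exact mul_le_of_le_one_right (by positivity)
            (Real.rpow_le_one_of_one_le_of_nonpos hL (by norm_num))

theorem log_deviation_le_of_sq_le {L T1 c D : ℝ} (hc : 0 < c) (hD : 0 ≤ D) (hL : 1 ≤ L)
    (hT1 : 1 ≤ T1) (h : (128 * (D + 1) * L ^ 2) ^ 2 ≤ c ^ 2 * T1) :
    128 * L * (D * Real.sqrt (T1 * L) + 1) ≤ c * T1 := by
  set s := Real.sqrt T1
  have hs : 1 ≤ s := Real.one_le_sqrt.mpr hT1
  have hss : s * s = T1 := Real.mul_self_sqrt (by linarith)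
  have hsL : Real.sqrt (T1 * L) ≤ s * L := by
    rw [Real.sqrt_mul (by linarith), ← Real.sqrt_sq (by linarith : 0 ≤ L)]
    gcongr
    rw [Real.sqrt_sq (by linarith)]
    nlinarith
  have hcs : 128 * (D + 1) * L ^ 2 ≤ c * s := by
    rw [← Real.sqrt_sq hc.le, ← Real.sqrt_mul (sq_nonneg c)]
    exact Real.le_sqrt_of_sq_le h
  calc 128 * L * (D * Real.sqrt (T1 * L) + 1) ≤ 128 * L * (D * (s * L) + s * L) := by
        gcongr
        nlinarith
    _ = 128 * (D + 1) * L ^ 2 * s := by ring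
    _ ≤ c * s * s := by gcongr
    _ = c * T1 := by rw [mul_assoc, hss]

open Filter in
theorem eventually_lucky_regime {D c : ℝ} (hD : 0 ≤ D) (hc : 0 < c) :
    ∀ᶠ T : ℕ in atTop, 1 ≤ Real.log T ∧
      128 * Real.log T * (D * Real.sqrt (T1of T * Real.log T) + 1) ≤ c * T1of T ∧
      c * T1of T + D * Real.sqrt (T1of T * Real.log T) ≤ T := by
  have hε : 0 < (c / (128 * (D + 1))) ^ 2 := by positivity
  have hlog : ∀ᶠ T : ℕ in atTop, 1 ≤ Real.log T :=
    (Real.tendsto_log_atTop.comp tendsto_natCast_atTop_atTop).eventually_ge_atTop 1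
  have hpoly : ∀ᶠ x : ℝ in atTop,
      Real.log x ^ 4 ≤ (c / (128 * (D + 1))) ^ 2 * x ^ ((3 : ℝ) / 7) := by
    filter_upwards [(isLittleO_log_rpow_rpow_atTop ((4 : ℕ) : ℝ)
      (by norm_num : (0 : ℝ) < 3 / 7)).bound hε, eventually_ge_atTop 0] with x hx hx0
    rw [Real.rpow_natCast, Real.norm_eq_abs, Real.norm_eq_abs,
      abs_of_nonneg (Real.rpow_nonneg hx0 _)] at hx
    exact (le_abs_self _).trans hx
  have hbig : ∀ᶠ T : ℕ in atTop, 4 * c + 1 ≤ (T : ℝ) ^ ((3 : ℝ) / 7) :=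
    ((tendsto_rpow_atTop (by norm_num)).comp tendsto_natCast_atTop_atTop).eventually_ge_atTop _
  filter_upwards [hlog, tendsto_natCast_atTop_atTop.eventually hpoly, hbig] with T hL hpoly hbig
  set L := Real.log T
  obtain ⟨hT1lo, hT1hi⟩ := T1of_bounds hL
  have hT : 1 ≤ (T : ℝ) := hL.trans (Real.log_le_self (Nat.cast_nonneg T))
  have h37 : 1 ≤ (T : ℝ) ^ ((3 : ℝ) / 7) := Real.one_le_rpow hT (by norm_num)
  have h47 : 1 ≤ (T : ℝ) ^ ((4 : ℝ) / 7) := Real.one_le_rpow hT (by norm_num)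
  have hreg := log_deviation_le_of_sq_le hc hD hL (h37.trans hT1lo) <| by
    calc (128 * (D + 1) * L ^ 2) ^ 2 = (128 * (D + 1)) ^ 2 * L ^ 4 := by ring
      _ ≤ (128 * (D + 1)) ^ 2 * ((c / (128 * (D + 1))) ^ 2 * (T : ℝ) ^ ((3 : ℝ) / 7)) := by
          gcongr
      _ = c ^ 2 * (T : ℝ) ^ ((3 : ℝ) / 7) := by field_simp
      _ ≤ c ^ 2 * T1of T := by gcongr
  refine ⟨hL, hreg, ?_⟩
  have hδ : D * Real.sqrt (T1of T * L) ≤ c * T1of T := by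
    nlinarith [mul_nonneg hD (Real.sqrt_nonneg (T1of T * L))]
  calc c * T1of T + D * Real.sqrt (T1of T * L) ≤ 2 * c * T1of T := by linarith
    _ ≤ 2 * c * ((T : ℝ) ^ ((4 : ℝ) / 7) + 1) := by gcongr
    _ ≤ (4 * c + 1) * (T : ℝ) ^ ((4 : ℝ) / 7) := by nlinarith
    _ ≤ (T : ℝ) ^ ((3 : ℝ) / 7) * (T : ℝ) ^ ((4 : ℝ) / 7) := by gcongr
    _ = T := by rw [← Real.rpow_add (by linarith)]; norm_num

/-- in the three-level policy (with the parameters of Theorem 3.3),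
condition on the events `W1` (concentration of per-group pull counts), `W2`
(concentration of tape window averages) and `W3` (anti-concentration: for each arm
`a` there is a group `s_a` whose first `q a · T1` tape cells for arm `a` average at
least `μ a + 1/√(q a T1)` while the first `q (3-a) · T1` cells for the other arm
average at most `μ (3-a) - 1/√(q (3-a) T1)`).  Then, provided `T` is larger than
some constant, for each arm `a` there is a first-level group `s_a` with
`μ̄_a^{1,s_a} > μ a + 1/(4√(q a T1))` and
`μ̄_{3-a}^{1,s_a} < μ (3-a) - 1/(4√(q (3-a) T1))`. -/
theorem lucky_group (Nest Lfdp : ℕ) (q : Fin 2 → ℝ) (hq0 : ∀ a, 0 < q a) :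
    ∃ T0 : ℕ, ∀ T : ℕ, T0 ≤ T →
    ∀ (Ω : Type) [MeasureSpace Ω] [IsProbabilityMeasure (volume : Measure Ω)],
    ∀ e : Execution Ω 2 T Nest,
      ThreeLevel e.obs (sigT T) (T1of T) (T2of T) Lfdp →
      (∀ (a : Fin 2) (j : ℕ), j < sigT T * T1of T →
        ∫ ω, (pullCount e.A (Finset.Ico (j * Lfdp) ((j + 1) * Lfdp)) a ω : ℝ) = q a) →
    ∀ gtape : ℕ → Fin 2 → ℕ → Ω → ℝ,
      (∀ s < sigT T, ∀ (ω : Ω), ∀ t ∈ grp (T1of T) Lfdp s,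
        e.r t ω = gtape s (e.A t ω) (idxIn e.A (grp (T1of T) Lfdp s) (e.A t ω) ω t) ω) →
    ∀ ω : Ω,
      -- event W1 at ω
      (∀ s < sigT T, ∀ a : Fin 2,
        |(pullCount e.A (grp (T1of T) Lfdp s) a ω : ℝ) - q a * T1of T|
          ≤ (Lfdp : ℝ) * Real.sqrt (T1of T * Real.log T)) →
      -- event W2 at ω
      (∀ s < sigT T, ∀ a : Fin 2, ∀ τ1 τ2 : ℕ, τ1 ≤ τ2 → τ2 < T →
        |(∑ j ∈ Finset.Icc τ1 τ2, gtape s a j ω) / ((τ2 - τ1 + 1 : ℕ) : ℝ) - e.μ a|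
          ≤ Real.sqrt (2 * Real.log T / ((τ2 - τ1 + 1 : ℕ) : ℝ))) →
      -- event W3 at ω
      (∀ a : Fin 2, ∃ s < sigT T,
        e.μ a + 1 / Real.sqrt (q a * T1of T) ≤
          (∑ j ∈ Finset.range ⌊q a * (T1of T : ℝ)⌋₊, gtape s a j ω) / (⌊q a * (T1of T : ℝ)⌋₊ : ℝ) ∧
        (∑ j ∈ Finset.range ⌊q (1 - a) * (T1of T : ℝ)⌋₊, gtape s (1 - a) j ω) /
            (⌊q (1 - a) * (T1of T : ℝ)⌋₊ : ℝ)
          ≤ e.μ (1 - a) - 1 / Real.sqrt (q (1 - a) * T1of T)) →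
      ∀ a : Fin 2, ∃ s < sigT T,
        e.μ a + 1 / (4 * Real.sqrt (q a * T1of T)) <
          empMean e.A e.r (grp (T1of T) Lfdp s) a ω ∧
        empMean e.A e.r (grp (T1of T) Lfdp s) (1 - a) ω <
          e.μ (1 - a) - 1 / (4 * Real.sqrt (q (1 - a) * T1of T)) := by
  obtain ⟨T0, hT0⟩ := Filter.eventually_atTop.mp <| Filter.eventually_all.mpr fun b =>
    eventually_lucky_regime (Nat.cast_nonneg Lfdp) (hq0 b)
  refine ⟨T0, fun T hT Ω _ _ e _ _ gtape hg ω hW1 hW2 hW3 a => ?_⟩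
  obtain ⟨s, hs, hhigh, hlow⟩ := hW3 a
  have hmean := empMean_eq_of_tape (fun b j => gtape s b j ω) (hg s hs ω)
  obtain ⟨hL, hu, hn⟩ := hT0 T hT a
  obtain ⟨hL', hu', hn'⟩ := hT0 T hT (1 - a)
  refine ⟨s, hs, ?_, ?_⟩
  · rw [hmean]
    exact WindowMeansConcentrate.lt_mean_of_le_mean_floor (hW2 s hs a) hL hu hn (hW1 s hs a) hhigh
  · rw [hmean]
    exact WindowMeansConcentrate.mean_lt_of_mean_floor_le (hW2 s hs (1 - a)) hL' hu' hn'
      (hW1 s hs (1 - a)) hlow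

end IncExp
end
end
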